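/- For any θ > 0, G > 0 and S > (θG/2)^{-1/θ}, the sum ∑_{k=1}^∞ e^{-G (kS)^θ} is at most 2 e^{-G S^θ}. -/
import Mathlib


open Real

lemma aux_basel_le : ∑' k : ℕ, (1 : ℝ) / ((k : ℝ) + 1) ^ 2 ≤ 2 := by
  have h : HasSum (fun n : ℕ => (1 : ℝ) / (n : ℝ) ^ 2) (π ^ 2 / 6) := hasSum_zeta_two
  have h1 : HasSum (fun k : ℕ => (1 : ℝ) / ((k : ℝ) + 1) ^ 2) (π ^ 2 / 6) := by
    have h2 := (hasSum_nat_add_iff' (f := fun n : ℕ => (1 : ℝ) / (n : ℝ) ^ 2)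
      (g := π ^ 2 / 6) 1).mpr h
    simpa using h2
  rw [h1.tsum_eq]
  nlinarith [Real.pi_lt_d2, Real.pi_pos]

lemma aux_summable : Summable (fun k : ℕ => (1 : ℝ) / ((k : ℝ) + 1) ^ 2) := by
  have := Real.summable_one_div_nat_pow (p := 2)
  rw [← summable_nat_add_iff 1] at this
  · simpa using this.mpr (by norm_num)

theorem stmt_0 (θ G S : ℝ) (hθ : 0 < θ) (hG : 0 < G) (hS : 0 < S)
    (hSlarge : (θ * G / 2) ^ (-(1:ℝ) / θ) < S) :
    ∑' k : ℕ, Real.exp (-G * (((k : ℝ) + 1) * S) ^ θ) ≤ 2 * Real.exp (-G * S ^ θ) := by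
  have hSθ : (0:ℝ) < S ^ θ := Real.rpow_pos_of_pos hS θ
  have ha : 2 < G * S ^ θ * θ := by
    have hb : (0:ℝ) < θ * G / 2 := by positivity
    have h := Real.rpow_lt_rpow (Real.rpow_nonneg hb.le _) hSlarge hθ
    rw [← Real.rpow_mul hb.le] at h
    rw [show (-(1:ℝ)/θ) * θ = -1 by field_simp] at h
    rw [Real.rpow_neg_one] at h
    rw [inv_lt_iff_one_lt_mul₀ (by positivity)] at h
    calc (2:ℝ) = 2 * 1 := by ring
    _ < 2 * (S ^ θ * (θ * G / 2)) := by linarith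
    _ = G * S ^ θ * θ := by ring
  set a := G * S ^ θ * θ with ha_def
  have key : ∀ k : ℕ, Real.exp (-G * (((k : ℝ) + 1) * S) ^ θ)
      ≤ Real.exp (-G * S ^ θ) * (1 / ((k : ℝ) + 1) ^ 2) := by
    intro k
    have hk1 : (1:ℝ) ≤ (k : ℝ) + 1 := by have := Nat.cast_nonneg (α := ℝ) k; linarith
    have hkpos : (0:ℝ) < (k : ℝ) + 1 := by positivity
    have hmul : (((k : ℝ) + 1) * S) ^ θ = ((k : ℝ) + 1) ^ θ * S ^ θ :=
      Real.mul_rpow hkpos.le hS.le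
    have hlog : (1:ℝ) + Real.log ((k:ℝ)+1) * θ ≤ ((k : ℝ) + 1) ^ θ := by
      have h := Real.add_one_le_exp (Real.log ((k:ℝ)+1) * θ)
      rw [Real.rpow_def_of_pos hkpos]
      linarith
    have hexp1 : -G * (((k : ℝ) + 1) * S) ^ θ ≤ -G * S ^ θ + (-a * Real.log ((k:ℝ)+1)) := by
      rw [hmul]
      have hlognn : 0 ≤ Real.log ((k:ℝ)+1) := Real.log_nonneg hk1
      nlinarith [mul_le_mul_of_nonneg_left hlog (mul_pos hG hSθ).le]
    calc Real.exp (-G * (((k : ℝ) + 1) * S) ^ θ)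
        ≤ Real.exp (-G * S ^ θ + (-a * Real.log ((k:ℝ)+1))) := Real.exp_le_exp.mpr hexp1
      _ = Real.exp (-G * S ^ θ) * ((k:ℝ)+1) ^ (-a) := by
          rw [Real.exp_add, Real.rpow_def_of_pos hkpos]; ring_nf
      _ ≤ Real.exp (-G * S ^ θ) * ((k:ℝ)+1) ^ (-2 : ℝ) := by
          apply mul_le_mul_of_nonneg_left _ (Real.exp_nonneg _)
          exact Real.rpow_le_rpow_of_exponent_le hk1 (by linarith)
      _ = Real.exp (-G * S ^ θ) * (1 / ((k : ℝ) + 1) ^ 2) := by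
          rw [show (-2:ℝ) = -(2:ℕ) by norm_num, Real.rpow_neg hkpos.le,
            Real.rpow_natCast, one_div]
  have hsum2 : Summable (fun k : ℕ => Real.exp (-G * S ^ θ) * (1 / ((k : ℝ) + 1) ^ 2)) :=
    aux_summable.mul_left _
  have hsum1 : Summable (fun k : ℕ => Real.exp (-G * (((k : ℝ) + 1) * S) ^ θ)) :=
    Summable.of_nonneg_of_le (fun k => Real.exp_nonneg _) key hsum2
  calc ∑' k : ℕ, Real.exp (-G * (((k : ℝ) + 1) * S) ^ θ)
      ≤ ∑' k : ℕ, Real.exp (-G * S ^ θ) * (1 / ((k : ℝ) + 1) ^ 2) :=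
        Summable.tsum_le_tsum key hsum1 hsum2
    _ = Real.exp (-G * S ^ θ) * ∑' k : ℕ, (1 / ((k : ℝ) + 1) ^ 2) := tsum_mul_left
    _ ≤ Real.exp (-G * S ^ θ) * 2 :=
        mul_le_mul_of_nonneg_left aux_basel_le (Real.exp_nonneg _)
    _ = 2 * Real.exp (-G * S ^ θ) := by ring
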